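/- arXiv:2409.14068 — 2 statements merged into one kernel-verified Lean document; each statement's English description precedes it below -/
import Mathlib

section
/- Let H be a complex Hilbert space, let A and B be positive bounded operators on H, and let P be a positive bounded operator satisfying ⟪P x, x⟫ = inf{ ⟪A(x−y), x−y⟫ + ⟪B y, y⟫ : y ∈ H } for all x ∈ H (i.e., P = A : B). Then A and B are mutually singular if and only if P = 0. Consequently, a positive bounded operator X is singular with respect to A if and only if X is a fixed point of the map μ_A(X) = X − (X : A). -/
open ContinuousLinearMap Filter Topology

variable {H : Type*} [NormedAddCommGroup H] [InnerProductSpace ℂ H] [CompleteSpace H]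

/-- `B` is absolutely continuous with respect to `A`: whenever `⟪A xₙ, xₙ⟫ → 0` and
`⟪B (xₙ - xₘ), xₙ - xₘ⟫ → 0` as `n, m → ∞`, we have `⟪B xₙ, xₙ⟫ → 0`. -/
def AbsCont (B A : H →L[ℂ] H) : Prop :=
  ∀ x : ℕ → H,
    Tendsto (fun n => (inner ℂ (A (x n)) (x n) : ℂ).re) atTop (𝓝 0) →
    Tendsto (fun p : ℕ × ℕ => (inner ℂ (B (x p.1 - x p.2)) (x p.1 - x p.2) : ℂ).re)
      (atTop ×ˢ atTop) (𝓝 0) →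
    Tendsto (fun n => (inner ℂ (B (x n)) (x n) : ℂ).re) atTop (𝓝 0)

/-- `A` and `B` are mutually singular: the only positive operator dominated by both is `0`.
(Here `≤` is the Loewner order: `C ≤ A ↔ (A - C).IsPositive`.) -/
def MutuallySingular (A B : H →L[ℂ] H) : Prop :=
  ∀ C : H →L[ℂ] H, C.IsPositive → C ≤ A → C ≤ B → C = 0

lemma aux_re_eq (T : H →L[ℂ] H) (x : H) :
    T.reApplyInnerSelf x = (inner ℂ (T x) x : ℂ).re := rfl

/-- Parallelogram-type inequality for the quadratic form of a positive operator. -/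
lemma aux_parallelogram {C : H →L[ℂ] H} (hC : C.IsPositive) (u v : H) :
    (inner ℂ (C (u + v)) (u + v) : ℂ).re ≤
      2 * ((inner ℂ (C u) u : ℂ).re + (inner ℂ (C v) v : ℂ).re) := by
  have key : (inner ℂ (C (u + v)) (u + v) : ℂ).re + (inner ℂ (C (u - v)) (u - v) : ℂ).re =
      2 * ((inner ℂ (C u) u : ℂ).re + (inner ℂ (C v) v : ℂ).re) := by
    simp only [map_add, map_sub, inner_add_left, inner_add_right, inner_sub_left,
      inner_sub_right, Complex.add_re, Complex.sub_re]
    ring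
  have hnn : 0 ≤ (inner ℂ (C (u - v)) (u - v) : ℂ).re := hC.2 _
  linarith

/-- Key lemma: singularity is characterized by vanishing of the parallel sum. -/
lemma aux_key (A B : H →L[ℂ] H) (hA : A.IsPositive) (hB : B.IsPositive)
    (P : H →L[ℂ] H) (hPpos : P.IsPositive)
    (hP : ∀ x : H, (inner ℂ (P x) x : ℂ).re =
      ⨅ y : H, ((inner ℂ (A (x - y)) (x - y) : ℂ).re + (inner ℂ (B y) y : ℂ).re)) :
    MutuallySingular A B ↔ P = 0 := by
  have bdd : ∀ x : H, BddBelow (Set.range fun y =>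
      ((inner ℂ (A (x - y)) (x - y) : ℂ).re + (inner ℂ (B y) y : ℂ).re)) := by
    intro x
    refine ⟨0, ?_⟩
    rintro r ⟨y, rfl⟩
    exact add_nonneg (hA.2 _) (hB.2 _)
  constructor
  · intro h
    -- P ≤ A and P ≤ B, so singularity forces P = 0
    have hPA : P ≤ A := by
      refine ⟨isSelfAdjoint_iff_isSymmetric.mp (hA.isSelfAdjoint.sub hPpos.isSelfAdjoint), fun x => ?_⟩
      rw [aux_re_eq, sub_apply, inner_sub_left, Complex.sub_re, sub_nonneg, hP x]
      have := ciInf_le (bdd x) (0 : H)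
      simpa using this
    have hPB : P ≤ B := by
      refine ⟨isSelfAdjoint_iff_isSymmetric.mp (hB.isSelfAdjoint.sub hPpos.isSelfAdjoint), fun x => ?_⟩
      rw [aux_re_eq, sub_apply, inner_sub_left, Complex.sub_re, sub_nonneg, hP x]
      have := ciInf_le (bdd x) x
      simpa using this
    exact h P hPpos hPA hPB
  · intro hP0 C hC hCA hCB
    -- quadratic form of C is ≤ 2 · (the inf), which is 0
    have hform : ∀ x : H, (inner ℂ (C x) x : ℂ).re ≤ 0 := by
      intro x
      have key : ∀ y : H, (inner ℂ (C x) x : ℂ).re / 2 ≤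
          ((inner ℂ (A (x - y)) (x - y) : ℂ).re + (inner ℂ (B y) y : ℂ).re) := by
        intro y
        have hx : x = (x - y) + y := by abel
        have h1 : (inner ℂ (C x) x : ℂ).re ≤
            2 * ((inner ℂ (C (x - y)) (x - y) : ℂ).re + (inner ℂ (C y) y : ℂ).re) := by
          conv_lhs => rw [hx]
          exact aux_parallelogram hC (x - y) y
        have hCA' : (inner ℂ (C (x - y)) (x - y) : ℂ).re ≤ (inner ℂ (A (x - y)) (x - y) : ℂ).re := by
          have := hCA.2 (x - y)
          rw [aux_re_eq, sub_apply, inner_sub_left, Complex.sub_re, sub_nonneg] at this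
          exact this
        have hCB' : (inner ℂ (C y) y : ℂ).re ≤ (inner ℂ (B y) y : ℂ).re := by
          have := hCB.2 y
          rw [aux_re_eq, sub_apply, inner_sub_left, Complex.sub_re, sub_nonneg] at this
          exact this
        linarith
      have hle : (inner ℂ (C x) x : ℂ).re / 2 ≤
          ⨅ y : H, ((inner ℂ (A (x - y)) (x - y) : ℂ).re + (inner ℂ (B y) y : ℂ).re) :=
        le_ciInf key
      rw [← hP x, hP0] at hle
      simp only [zero_apply, inner_zero_left, Complex.zero_re] at hle
      linarith
    -- hence C ≤ 0 and 0 ≤ C, so C = 0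
    have h1 : C ≤ 0 := by
      refine ⟨isSelfAdjoint_iff_isSymmetric.mp (by simpa using hC.isSelfAdjoint.neg), fun x => ?_⟩
      rw [aux_re_eq, sub_apply, zero_apply, zero_sub, inner_neg_left, Complex.neg_re,
        neg_nonneg]
      exact hform x
    have h2 : (0 : H →L[ℂ] H) ≤ C := (nonneg_iff_isPositive C).mpr hC
    exact le_antisymm h1 h2

/-- Singularity is characterized by the parallel sum: if `P = A : B` (characterized by its
quadratic form), then `A ⟂ B` iff `P = 0`.  Consequently a positive operator `X` is
`A`-singular iff it is a fixed point of `μ_A(X) = X - (X : A)`, i.e. `X - P' = X` where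
`P' = X : A`. -/
theorem statement16
    (A B : H →L[ℂ] H) (hA : A.IsPositive) (hB : B.IsPositive)
    (P : H →L[ℂ] H) (hPpos : P.IsPositive)
    (hP : ∀ x : H, (inner ℂ (P x) x : ℂ).re =
      ⨅ y : H, ((inner ℂ (A (x - y)) (x - y) : ℂ).re + (inner ℂ (B y) y : ℂ).re)) :
    (MutuallySingular A B ↔ P = 0) ∧
    (∀ X : H →L[ℂ] H, X.IsPositive →
      ∀ P' : H →L[ℂ] H, P'.IsPositive →
        (∀ x : H, (inner ℂ (P' x) x : ℂ).re =
          ⨅ y : H, ((inner ℂ (X (x - y)) (x - y) : ℂ).re + (inner ℂ (A y) y : ℂ).re)) →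
        (MutuallySingular X A ↔ X - P' = X)) := by
  refine ⟨aux_key A B hA hB P hPpos hP, ?_⟩
  intro X hX P' hP'pos hP'
  rw [sub_eq_self]
  exact aux_key X A hX hA P' hP'pos hP'
end

section
/- Let H be a complex Hilbert space and let A and B be positive bounded operators on H. Then there exists a unique positive bounded operator P on H such that ⟪P x, x⟫ = inf{ ⟪A(x−y), x−y⟫ + ⟪B y, y⟫ : y ∈ H } for all x ∈ H (the parallel sum A : B of A and B). Moreover, P ≤ A and P ≤ B. -/
open ContinuousLinearMap Filter Topology

variable {H : Type*} [NormedAddCommGroup H] [InnerProductSpace ℂ H] [CompleteSpace H]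

private lemma re_inner_symm' (T : H →L[ℂ] H) (hT : IsSelfAdjoint T) (u v : H) :
    (inner ℂ (T u) v : ℂ).re = (inner ℂ (T v) u : ℂ).re := by
  have h := (isSelfAdjoint_iff_isSymmetric.mp hT) u v
  simp only [coe_coe] at h
  rw [h, ← inner_conj_symm u (T v), Complex.conj_re]

private lemma pos_re_nonneg {C : H →L[ℂ] H} (hC : C.IsPositive) (z : H) :
    0 ≤ (inner ℂ (C z) z : ℂ).re := by
  have := hC.2 z
  rwa [reApplyInnerSelf_apply, RCLike.re_to_complex] at this

private lemma inner_self_re' (y : H) : (inner ℂ y y : ℂ).re = ‖y‖ ^ 2 := by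
  have := inner_self_eq_norm_sq (𝕜 := ℂ) y
  rwa [RCLike.re_to_complex] at this

private lemma expand_re (T : H →L[ℂ] H) (hT : IsSelfAdjoint T) (u v : H) :
    (inner ℂ (T (u - v)) (u - v) : ℂ).re
      = (inner ℂ (T u) u : ℂ).re - 2 * (inner ℂ (T u) v : ℂ).re + (inner ℂ (T v) v : ℂ).re := by
  have h := re_inner_symm' T hT u v
  rw [map_sub, inner_sub_left, inner_sub_right, inner_sub_right]
  simp only [Complex.sub_re]
  linarith

private lemma pos_cs {C : H →L[ℂ] H} (hC : C.IsPositive) (x y : H) :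
    ((inner ℂ (C x) y : ℂ).re) ^ 2 ≤ (inner ℂ (C x) x : ℂ).re * (inner ℂ (C y) y : ℂ).re := by
  have key : ∀ t : ℝ, 0 ≤ (inner ℂ (C y) y : ℂ).re * (t * t)
      + (2 * (inner ℂ (C x) y : ℂ).re) * t + (inner ℂ (C x) x : ℂ).re := by
    intro t
    have h0 := pos_re_nonneg hC (x + (t : ℂ) • y)
    have hsym : (inner ℂ (C x) y : ℂ).re = (inner ℂ (C y) x : ℂ).re := re_inner_symm' C hC.isSelfAdjoint x y
    rw [map_add, map_smul, inner_add_left, inner_add_right, inner_add_right,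
      inner_smul_left, inner_smul_right, inner_smul_left, inner_smul_right] at h0
    simp only [Complex.add_re, Complex.mul_re, Complex.conj_ofReal, Complex.ofReal_re,
      Complex.ofReal_im, zero_mul, mul_zero, sub_zero] at h0
    rw [← hsym] at h0
    nlinarith [h0]
  have hd := discrim_le_zero key
  rw [discrim] at hd
  nlinarith [hd]

private lemma pos_norm_bound {C : H →L[ℂ] H} (hC : C.IsPositive) {M : ℝ} (hM : 0 ≤ M)
    (h : ∀ z : H, (inner ℂ (C z) z : ℂ).re ≤ M * ‖z‖ ^ 2) (x : H) : ‖C x‖ ≤ M * ‖x‖ := by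
  have h4 := pos_cs hC x (C x)
  have e1 : (inner ℂ (C x) (C x) : ℂ).re = ‖C x‖ ^ 2 := inner_self_re' _
  rw [e1] at h4
  by_cases hz : ‖C x‖ = 0
  · rw [hz]; positivity
  · have h5 := h x
    have h6 := h (C x)
    have hn1 := pos_re_nonneg hC x
    have hn2 := pos_re_nonneg hC (C x)
    have hpos : 0 < ‖C x‖ := lt_of_le_of_ne (norm_nonneg _) (Ne.symm hz)
    have hsq : ‖C x‖ ^ 2 ≤ (M * ‖x‖) ^ 2 := by
      nlinarith [mul_pos hpos hpos, norm_nonneg x, mul_nonneg hM (sq_nonneg ‖x‖)]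
    have hs := Real.sqrt_le_sqrt hsq
    rwa [Real.sqrt_sq (norm_nonneg _), Real.sqrt_sq (by positivity)] at hs

/-- quadratic functional being minimized -/
private noncomputable def qf (A B : H →L[ℂ] H) (x y : H) : ℝ :=
  (inner ℂ (A (x - y)) (x - y) : ℂ).re + (inner ℂ (B y) y : ℂ).re

private noncomputable def epsn (n : ℕ) : ℝ := ((n : ℝ) + 1)⁻¹

private lemma epsn_pos (n : ℕ) : 0 < epsn n := by
  simp only [epsn]; positivity

private lemma epsn_anti : Antitone epsn := by
  intro m n h
  have : (m : ℝ) + 1 ≤ (n : ℝ) + 1 := by exact_mod_cast by omega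
  exact inv_anti₀ (by positivity) this

private lemma epsn_tendsto : Tendsto epsn atTop (𝓝 0) := by
  have := tendsto_one_div_add_atTop_nhds_zero_nat (𝕜 := ℝ)
  unfold epsn
  simpa [epsn, one_div] using this

private noncomputable def Tn (A B : H →L[ℂ] H) (n : ℕ) : H →L[ℂ] H :=
  A + B + ((epsn n : ℝ) : ℂ) • 1

private noncomputable def Rn (A B : H →L[ℂ] H) (n : ℕ) : H →L[ℂ] H :=
  Ring.inverse (Tn A B n)

private noncomputable def Pn (A B : H →L[ℂ] H) (n : ℕ) : H →L[ℂ] H :=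
  A - A * Rn A B n * A

private noncomputable def ysn (A B : H →L[ℂ] H) (n : ℕ) (x : H) : H :=
  Rn A B n (A x)

section lemmas
variable (A B : H →L[ℂ] H)

private lemma Tn_sa (hA : A.IsPositive) (hB : B.IsPositive) (n : ℕ) :
    IsSelfAdjoint (Tn A B n) := by
  refine (hA.isSelfAdjoint.add hB.isSelfAdjoint).add (IsSelfAdjoint.smul ?_ (IsSelfAdjoint.one _))
  rw [IsSelfAdjoint, Complex.star_def, Complex.conj_ofReal]

private lemma Tn_re (n : ℕ) (y : H) :
    (inner ℂ (Tn A B n y) y : ℂ).re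
      = (inner ℂ (A y) y : ℂ).re + (inner ℂ (B y) y : ℂ).re + epsn n * ‖y‖ ^ 2 := by
  have : Tn A B n y = A y + B y + ((epsn n : ℝ) : ℂ) • y := by
    simp [Tn, add_apply, smul_apply, one_apply]
  rw [this, inner_add_left, inner_add_left, inner_smul_left, Complex.conj_ofReal]
  simp only [Complex.add_re, Complex.re_ofReal_mul]
  rw [inner_self_re' y]

private lemma Tn_coercive (hA : A.IsPositive) (hB : B.IsPositive) (n : ℕ) (y : H) :
    epsn n * ‖y‖ ^ 2 ≤ (inner ℂ (Tn A B n y) y : ℂ).re := by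
  rw [Tn_re]
  have := pos_re_nonneg hA y
  have := pos_re_nonneg hB y
  linarith

private lemma Tn_pos (hA : A.IsPositive) (hB : B.IsPositive) (n : ℕ) :
    (Tn A B n).IsPositive := by
  refine isPositive_def'.mpr ⟨Tn_sa A B hA hB n, fun y => ?_⟩
  rw [reApplyInnerSelf_apply, RCLike.re_to_complex]
  have := Tn_coercive A B hA hB n y
  have := epsn_pos n
  nlinarith [sq_nonneg ‖y‖]

private lemma Tn_isUnit (hA : A.IsPositive) (hB : B.IsPositive) (n : ℕ) :
    IsUnit (Tn A B n) := by
  refine isUnit_of_forall_le_norm_inner_map _ (c := ⟨epsn n, (epsn_pos n).le⟩)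
    (by exact_mod_cast epsn_pos n) fun x => ?_
  have h1 := Tn_coercive A B hA hB n x
  calc ‖x‖ ^ 2 * (⟨epsn n, (epsn_pos n).le⟩ : NNReal)
      = epsn n * ‖x‖ ^ 2 := by push_cast; ring
    _ ≤ (inner ℂ (Tn A B n x) x : ℂ).re := h1
    _ ≤ ‖(inner ℂ (Tn A B n x) x : ℂ)‖ := Complex.re_le_norm _
  
private lemma Tn_Rn (hA : A.IsPositive) (hB : B.IsPositive) (n : ℕ) (z : H) :
    Tn A B n (Rn A B n z) = z := by
  have h := Ring.mul_inverse_cancel _ (Tn_isUnit A B hA hB n)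
  have := congrArg (fun (f : H →L[ℂ] H) => f z) h
  simpa [mul_apply, Rn] using this

private lemma Rn_Tn (hA : A.IsPositive) (hB : B.IsPositive) (n : ℕ) :
    Rn A B n * Tn A B n = 1 :=
  Ring.inverse_mul_cancel _ (Tn_isUnit A B hA hB n)

private lemma Rn_sa (hA : A.IsPositive) (hB : B.IsPositive) (n : ℕ) :
    IsSelfAdjoint (Rn A B n) := by
  have h1 : Tn A B n * Rn A B n = 1 := Ring.mul_inverse_cancel _ (Tn_isUnit A B hA hB n)
  have hsa : star (Tn A B n) = Tn A B n := (Tn_sa A B hA hB n).star_eq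
  have h2 : star (Rn A B n) * Tn A B n = 1 := by
    rw [← hsa, ← star_mul, h1, star_one]
  calc star (Rn A B n) = star (Rn A B n) * (Tn A B n * Rn A B n) := by rw [h1, mul_one]
    _ = (star (Rn A B n) * Tn A B n) * Rn A B n := by rw [mul_assoc]
    _ = Rn A B n := by rw [h2, one_mul]

private lemma Pn_sa (hA : A.IsPositive) (hB : B.IsPositive) (n : ℕ) :
    IsSelfAdjoint (Pn A B n) := by
  have h1 : star A = A := hA.isSelfAdjoint.star_eq
  have h2 : star (Rn A B n) = Rn A B n := (Rn_sa A B hA hB n).star_eq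
  rw [IsSelfAdjoint, Pn, star_sub, star_mul, star_mul, h1, h2, mul_assoc]

private lemma ident (hA : A.IsPositive) (hB : B.IsPositive) (n : ℕ) (x y : H) :
    qf A B x y + epsn n * ‖y‖ ^ 2
      = (inner ℂ (Tn A B n (y - ysn A B n x)) (y - ysn A B n x) : ℂ).re
        + (inner ℂ (Pn A B n x) x : ℂ).re := by
  have e1 := expand_re A hA.isSelfAdjoint x y
  have e2 := expand_re (Tn A B n) (Tn_sa A B hA hB n) y (ysn A B n x)
  have e3 := Tn_re A B n y
  have e4 : Tn A B n (ysn A B n x) = A x := Tn_Rn A B hA hB n (A x)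
  have e5 : (inner ℂ (Tn A B n y) (ysn A B n x) : ℂ).re = (inner ℂ (A x) y : ℂ).re := by
    rw [re_inner_symm' _ (Tn_sa A B hA hB n), e4]
  have e6 : (inner ℂ (Tn A B n (ysn A B n x)) (ysn A B n x) : ℂ).re
      = (inner ℂ (A x) (ysn A B n x) : ℂ).re := by rw [e4]
  have e7 : (inner ℂ (Pn A B n x) x : ℂ).re
      = (inner ℂ (A x) x : ℂ).re - (inner ℂ (A x) (ysn A B n x) : ℂ).re := by
    have : Pn A B n x = A x - A (ysn A B n x) := by
      simp [Pn, sub_apply, mul_apply, ysn]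
    rw [this, inner_sub_left]
    simp only [Complex.sub_re]
    rw [re_inner_symm' A hA.isSelfAdjoint (ysn A B n x) x]
  rw [qf]
  rw [e2, e5, e6, e7, e1, e3]
  ring

private lemma att (hA : A.IsPositive) (hB : B.IsPositive) (n : ℕ) (x : H) :
    (inner ℂ (Pn A B n x) x : ℂ).re = qf A B x (ysn A B n x) + epsn n * ‖ysn A B n x‖ ^ 2 := by
  have h := ident A B hA hB n x (ysn A B n x)
  rw [sub_self] at h
  simp only [map_zero, inner_zero_left, Complex.zero_re, zero_add] at h
  linarith

private lemma cmin (hA : A.IsPositive) (hB : B.IsPositive) (n : ℕ) (x y : H) :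
    (inner ℂ (Pn A B n x) x : ℂ).re ≤ qf A B x y + epsn n * ‖y‖ ^ 2 := by
  have h := ident A B hA hB n x y
  have h2 := pos_re_nonneg (Tn_pos A B hA hB n) (y - ysn A B n x)
  linarith

end lemmas

/-- Existence and uniqueness of the parallel sum `A : B` of two positive operators on a
Hilbert space: there is a unique positive operator `P` whose quadratic form is
`inf_y (⟪A(x - y), x - y⟫ + ⟪B y, y⟫)`; moreover `P ≤ A` and `P ≤ B` in the Loewner
order. -/
theorem statement17
    (A B : H →L[ℂ] H) (hA : A.IsPositive) (hB : B.IsPositive) :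
    ∃ P : H →L[ℂ] H,
      (P.IsPositive ∧
        (∀ x : H, (inner ℂ (P x) x : ℂ).re =
          ⨅ y : H, ((inner ℂ (A (x - y)) (x - y) : ℂ).re + (inner ℂ (B y) y : ℂ).re)) ∧
        P ≤ A ∧ P ≤ B) ∧
      (∀ P' : H →L[ℂ] H, P'.IsPositive →
        (∀ x : H, (inner ℂ (P' x) x : ℂ).re =
          ⨅ y : H, ((inner ℂ (A (x - y)) (x - y) : ℂ).re + (inner ℂ (B y) y : ℂ).re)) →
        P' = P) := by
  classical
  haveI : Nonempty H := ⟨0⟩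
  -- the target infimum, as `qf`
  have hqf_eq : ∀ x : H,
      (⨅ y : H, ((inner ℂ (A (x - y)) (x - y) : ℂ).re + (inner ℂ (B y) y : ℂ).re))
        = ⨅ y : H, qf A B x y := fun x => rfl
  set c : ℕ → H → ℝ := fun n x => (inner ℂ (Pn A B n x) x : ℂ).re with hc
  have hqf_nonneg : ∀ x y : H, 0 ≤ qf A B x y := fun x y =>
    add_nonneg (pos_re_nonneg hA _) (pos_re_nonneg hB _)
  have hbdd : ∀ x : H, BddBelow (Set.range fun y => qf A B x y) := by
    intro x; exact ⟨0, by rintro _ ⟨y, rfl⟩; exact hqf_nonneg x y⟩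
  have hatt : ∀ n x, c n x = qf A B x (ysn A B n x) + epsn n * ‖ysn A B n x‖ ^ 2 :=
    fun n x => att A B hA hB n x
  have hmin : ∀ n x y, c n x ≤ qf A B x y + epsn n * ‖y‖ ^ 2 :=
    fun n x y => cmin A B hA hB n x y
  have hc_nonneg : ∀ n x, 0 ≤ c n x := by
    intro n x
    rw [hatt n x]
    have := hqf_nonneg x (ysn A B n x)
    have := (epsn_pos n).le
    positivity
  have hc_anti : ∀ x, Antitone fun n => c n x := by
    intro x m n hmn
    calc c n x ≤ qf A B x (ysn A B m x) + epsn n * ‖ysn A B m x‖ ^ 2 := hmin n x _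
      _ ≤ qf A B x (ysn A B m x) + epsn m * ‖ysn A B m x‖ ^ 2 := by
          have := epsn_anti hmn
          nlinarith [sq_nonneg ‖ysn A B m x‖]
      _ = c m x := (hatt m x).symm
  have hq_le_c : ∀ n x, (⨅ y : H, qf A B x y) ≤ c n x := by
    intro n x
    rw [hatt n x]
    have h1 : (⨅ y : H, qf A B x y) ≤ qf A B x (ysn A B n x) := ciInf_le (hbdd x) _
    have := (epsn_pos n).le
    nlinarith [sq_nonneg ‖ysn A B n x‖]
  have hc_leA : ∀ n (z : H), c n z ≤ ‖A‖ * ‖z‖ ^ 2 := by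
    intro n z
    have h1 := hmin n z 0
    have h2 : qf A B z 0 = (inner ℂ (A z) z : ℂ).re := by
      simp [qf]
    rw [h2] at h1
    have h3 : (inner ℂ (A z) z : ℂ).re ≤ ‖A‖ * ‖z‖ ^ 2 := by
      calc (inner ℂ (A z) z : ℂ).re ≤ ‖(inner ℂ (A z) z : ℂ)‖ := Complex.re_le_norm _
        _ ≤ ‖A z‖ * ‖z‖ := norm_inner_le_norm _ _
        _ ≤ (‖A‖ * ‖z‖) * ‖z‖ := by
            have := A.le_opNorm z
            nlinarith [norm_nonneg z]
        _ = ‖A‖ * ‖z‖ ^ 2 := by ring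
    simp only [norm_zero] at h1
    norm_num at h1
    linarith
  have hPn_pos : ∀ n, (Pn A B n).IsPositive := by
    intro n
    exact isPositive_def'.mpr ⟨Pn_sa A B hA hB n, fun x => by
      rw [reApplyInnerSelf_apply, RCLike.re_to_complex]; exact hc_nonneg n x⟩
  have hPn_norm : ∀ n (x : H), ‖Pn A B n x‖ ≤ ‖A‖ * ‖x‖ := fun n x =>
    pos_norm_bound (hPn_pos n) (norm_nonneg A) (fun z => hc_leA n z) x
  -- difference estimates
  have hD_pos : ∀ m n, m ≤ n → (Pn A B m - Pn A B n).IsPositive := by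
    intro m n hmn
    refine isPositive_def'.mpr ⟨(Pn_sa A B hA hB m).sub (Pn_sa A B hA hB n), fun x => ?_⟩
    rw [reApplyInnerSelf_apply, RCLike.re_to_complex, sub_apply, inner_sub_left]
    simp only [Complex.sub_re, sub_nonneg]
    exact hc_anti x hmn
  have hD_re : ∀ m n (z : H), (inner ℂ ((Pn A B m - Pn A B n) z) z : ℂ).re = c m z - c n z := by
    intro m n z
    rw [sub_apply, inner_sub_left]
    simp only [Complex.sub_re]; rfl
  have hkey : ∀ m n (x : H), m ≤ n →
      ‖(Pn A B m - Pn A B n) x‖ ^ 2 ≤ ‖A‖ * (c m x - c n x) := by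
    intro m n x hmn
    set D := Pn A B m - Pn A B n with hD
    have hcs := pos_cs (hD_pos m n hmn) x (D x)
    have e1 : (inner ℂ (D x) (D x) : ℂ).re = ‖D x‖ ^ 2 := inner_self_re' _
    rw [e1] at hcs
    have hb : (inner ℂ (D (D x)) (D x) : ℂ).re ≤ ‖A‖ * ‖D x‖ ^ 2 := by
      rw [hD_re m n (D x)]
      have := hc_leA m (D x)
      have := hc_nonneg n (D x)
      linarith
    have hb2 : (inner ℂ (D x) x : ℂ).re = c m x - c n x := hD_re m n x
    rw [hb2] at hcs
    have hnn : 0 ≤ c m x - c n x := sub_nonneg.mpr (hc_anti x hmn)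
    by_cases hz : ‖D x‖ = 0
    · rw [hz]
      have := mul_nonneg (norm_nonneg A) hnn
      simpa using this
    · have hpos : 0 < ‖D x‖ := lt_of_le_of_ne (norm_nonneg _) (Ne.symm hz)
      nlinarith [mul_pos hpos hpos, pos_re_nonneg (hD_pos m n hmn) (D x)]
  -- convergence of the quadratic forms
  have hconv : ∀ x : H, Tendsto (fun n => c n x) atTop (𝓝 (⨅ n, c n x)) := by
    intro x
    exact tendsto_atTop_ciInf (hc_anti x) ⟨0, by rintro _ ⟨n, rfl⟩; exact hc_nonneg n x⟩
  have hl_le : ∀ (x : H) n, (⨅ k, c k x) ≤ c n x := by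
    intro x n
    exact ciInf_le ⟨0, by rintro _ ⟨k, rfl⟩; exact hc_nonneg k x⟩ n
  -- Cauchy sequences
  have hcauchy : ∀ x : H, ∃ p : H, Tendsto (fun n => Pn A B n x) atTop (𝓝 p) := by
    intro x
    apply cauchySeq_tendsto_of_complete
    apply cauchySeq_of_le_tendsto_0 (fun N => Real.sqrt (‖A‖ * (c N x - ⨅ k, c k x)))
    · intro n m N hn hm
      have key : ∀ a b, N ≤ a → N ≤ b → a ≤ b →
          dist (Pn A B a x) (Pn A B b x) ≤ Real.sqrt (‖A‖ * (c N x - ⨅ k, c k x)) := by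
        intro a b ha hb hab
        rw [dist_eq_norm]
        have h1 : ‖Pn A B a x - Pn A B b x‖ ^ 2 ≤ ‖A‖ * (c a x - c b x) := by
          have := hkey a b x hab
          rwa [sub_apply] at this
        have h2 : ‖A‖ * (c a x - c b x) ≤ ‖A‖ * (c N x - ⨅ k, c k x) := by
          have h3 := hc_anti x ha
          have h4 := hl_le x b
          have := norm_nonneg A
          nlinarith
        have h5 := Real.sqrt_le_sqrt (h1.trans h2)
        rwa [Real.sqrt_sq (norm_nonneg _)] at h5
      rcases le_total n m with h | h
      · exact key n m hn hm h
      · rw [dist_comm]; exact key m n hm hn h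
    · have h0 : Tendsto (fun N => ‖A‖ * (c N x - ⨅ k, c k x)) atTop
          (𝓝 (‖A‖ * ((⨅ k, c k x) - ⨅ k, c k x))) :=
        ((hconv x).sub (tendsto_const_nhds (x := (⨅ k, c k x)))).const_mul ‖A‖
      rw [sub_self, mul_zero] at h0
      have h1 := h0.sqrt
      rw [Real.sqrt_zero] at h1
      exact h1
  choose Pf hPf using hcauchy
  -- build the limit operator
  have hadd : ∀ x y : H, Pf (x + y) = Pf x + Pf y := by
    intro x y
    refine tendsto_nhds_unique ?_ ((hPf x).add (hPf y))
    have : (fun n => Pn A B n (x + y)) = fun n => Pn A B n x + Pn A B n y := by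
      funext n; rw [map_add]
    rw [← this]
    exact hPf (x + y)
  have hsmul : ∀ (a : ℂ) (x : H), Pf (a • x) = a • Pf x := by
    intro a x
    refine tendsto_nhds_unique ?_ ((hPf x).const_smul a)
    have : (fun n => Pn A B n (a • x)) = fun n => a • Pn A B n x := by
      funext n; rw [map_smul]
    rw [← this]
    exact hPf (a • x)
  have hbound : ∀ x : H, ‖Pf x‖ ≤ ‖A‖ * ‖x‖ := by
    intro x
    exact le_of_tendsto' (hPf x).norm (fun n => hPn_norm n x) |>.trans le_rfl
  let Pl : H →ₗ[ℂ] H :=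
    { toFun := Pf
      map_add' := hadd
      map_smul' := by intro a x; simp only [RingHom.id_apply]; exact hsmul a x }
  let P : H →L[ℂ] H := Pl.mkContinuous ‖A‖ hbound
  have hPapp : ∀ x : H, P x = Pf x := fun _ => rfl
  have hPx : ∀ x : H, Tendsto (fun n => c n x) atTop (𝓝 ((inner ℂ (P x) x : ℂ).re)) := by
    intro x
    have h1 : Tendsto (fun n => (inner ℂ (Pn A B n x) x : ℂ)) atTop (𝓝 (inner ℂ (P x) x)) := by
      rw [hPapp x]
      exact (hPf x).inner tendsto_const_nhds
    exact (Complex.continuous_re.tendsto _).comp h1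
  have hform : ∀ x : H, (inner ℂ (P x) x : ℂ).re = ⨅ y : H, qf A B x y := by
    intro x
    refine le_antisymm (le_ciInf fun y => ?_) ?_
    · have ht : Tendsto (fun n => qf A B x y + epsn n * ‖y‖ ^ 2) atTop
          (𝓝 (qf A B x y + 0 * ‖y‖ ^ 2)) :=
        tendsto_const_nhds.add (epsn_tendsto.mul_const _)
      rw [zero_mul, add_zero] at ht
      exact le_of_tendsto_of_tendsto' (hPx x) ht (fun n => hmin n x y)
    · exact ge_of_tendsto' (hPx x) (fun n => hq_le_c n x)
  have hP_sa : IsSelfAdjoint P := by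
    rw [isSelfAdjoint_iff_isSymmetric]
    intro u v
    have h1 : Tendsto (fun n => (inner ℂ (Pn A B n u) v : ℂ)) atTop (𝓝 (inner ℂ (P u) v)) := by
      rw [hPapp u]; exact (hPf u).inner tendsto_const_nhds
    have h2 : Tendsto (fun n => (inner ℂ u (Pn A B n v) : ℂ)) atTop (𝓝 (inner ℂ u (P v))) := by
      rw [hPapp v]; exact tendsto_const_nhds.inner (hPf v)
    have heq : (fun n => (inner ℂ (Pn A B n u) v : ℂ)) = fun n => (inner ℂ u (Pn A B n v) : ℂ) := by
      funext n
      have := (isSelfAdjoint_iff_isSymmetric.mp (Pn_sa A B hA hB n)) u v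
      simpa using this
    rw [heq] at h1
    have := tendsto_nhds_unique h1 h2
    simpa using this
  have hP_pos : P.IsPositive := by
    refine isPositive_def'.mpr ⟨hP_sa, fun x => ?_⟩
    rw [reApplyInnerSelf_apply, RCLike.re_to_complex, hform x]
    exact le_ciInf fun y => hqf_nonneg x y
  have hPA : P ≤ A := by
    rw [ContinuousLinearMap.le_def, isPositive_def']
    refine ⟨hA.isSelfAdjoint.sub hP_sa, fun x => ?_⟩
    rw [reApplyInnerSelf_apply, RCLike.re_to_complex, sub_apply, inner_sub_left]
    simp only [Complex.sub_re, sub_nonneg]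
    rw [hform x]
    have h1 : (⨅ y : H, qf A B x y) ≤ qf A B x 0 := ciInf_le (hbdd x) 0
    have h2 : qf A B x 0 = (inner ℂ (A x) x : ℂ).re := by simp [qf]
    linarith
  have hPB : P ≤ B := by
    rw [ContinuousLinearMap.le_def, isPositive_def']
    refine ⟨hB.isSelfAdjoint.sub hP_sa, fun x => ?_⟩
    rw [reApplyInnerSelf_apply, RCLike.re_to_complex, sub_apply, inner_sub_left]
    simp only [Complex.sub_re, sub_nonneg]
    rw [hform x]
    have h1 : (⨅ y : H, qf A B x y) ≤ qf A B x x := ciInf_le (hbdd x) x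
    have h2 : qf A B x x = (inner ℂ (B x) x : ℂ).re := by simp [qf]
    linarith
  refine ⟨P, ⟨hP_pos, fun x => by rw [hqf_eq x]; exact hform x, hPA, hPB⟩, ?_⟩
  intro P' hP' hform'
  have hre : ∀ x : H, (inner ℂ (P' x) x : ℂ).re = (inner ℂ (P x) x : ℂ).re := by
    intro x
    rw [hform' x, hqf_eq x, hform x]
  have hfull : ∀ x : H, (inner ℂ (P' x) x : ℂ) = (inner ℂ (P x) x : ℂ) := by
    intro x
    have h1 := ((isPositive_iff_complex P').mp hP' x).1
    have h2 := ((isPositive_iff_complex P).mp hP_pos x).1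
    rw [← h1, ← h2]
    norm_cast
    simp only [RCLike.re_to_complex]
    exact hre x
  have hz : ∀ x : H, (inner ℂ (((P' - P : H →L[ℂ] H) : H →ₗ[ℂ] H) x) x : ℂ) = 0 := by
    intro x
    simp only [ContinuousLinearMap.coe_coe, sub_apply, inner_sub_left, hfull x, sub_self]
  have h0 := (inner_map_self_eq_zero ((P' - P : H →L[ℂ] H) : H →ₗ[ℂ] H)).mp hz
  have hPP : P' - P = 0 := by
    ext x
    have := LinearMap.congr_fun h0 x
    simpa using this
  exact sub_eq_zero.mp hPP
end
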